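/- Fix n ≥ 1, real parameters β_1,…,β_p and γ_1,…,γ_p, and H : {0,1}^n → ℝ. For β ∈ ℝ set a_β(0,0) = a_β(1,1) = cos β and a_β(0,1) = a_β(1,0) = −i·sin β. Define QAOA amplitudes by α_{0,z} = 2^{−n/2} for all z ∈ {0,1}^n and α_{t+1,j} = Σ_{z∈{0,1}^n} (Π_{h=1}^{n} a_{β_{t+1}}(j_h, z_h)) · α_{t,z} · e^{−i γ_{t+1} H(z)}. Let δ = max_{ℓ∈ℝ} |{z : H(z) = ℓ}| / 2^n and Δ_t = max_{u∈ℂ} |{z : α_{t,z} = u}| / 2^n. Then for every t < p and every j ∈ {0,1}^n, |α_{t+1,j}| ≤ (2^{n+1}·(2 − Δ_t − δ) + 1) · max_{z} |α_{t,z}|. -/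

import Mathlib

open scoped Classical

/-- The entries of `exp(−iβσ_X)`: `a(0,0) = a(1,1) = cos β`, `a(0,1) = a(1,0) = −i·sin β`. -/
noncomputable def aEnt (β : ℝ) : Fin 2 → Fin 2 → ℂ :=
  fun i k => if i = k then ((Real.cos β : ℝ) : ℂ) else -Complex.I * ((Real.sin β : ℝ) : ℂ)

/-- QAOA amplitudes on `n` qubits for the diagonal Hamiltonian `Ham`:
`α_{0,z} = 2^{−n/2}` and
`α_{t+1,j} = Σ_z (Π_h a_{β_{t+1}}(j_h, z_h)) α_{t,z} e^{−iγ_{t+1} Ham(z)}`. -/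
noncomputable def qaoaAmp (n : ℕ) (β γ : ℕ → ℝ) (Ham : (Fin n → Fin 2) → ℝ) :
    ℕ → (Fin n → Fin 2) → ℂ
  | 0, _ => ((1 / Real.sqrt (2 ^ n) : ℝ) : ℂ)
  | t + 1, j =>
      ∑ z : Fin n → Fin 2,
        (∏ h : Fin n, aEnt (β (t + 1)) (j h) (z h)) * qaoaAmp n β γ Ham t z *
          Complex.exp (-(Complex.I * (γ (t + 1) : ℂ) * (Ham z : ℂ)))

/-- `δ = max_ℓ |{z : Ham(z) = ℓ}| / 2^n`, the maximum fraction of bit strings sharing the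
same objective value. -/
noncomputable def deltaFrac (n : ℕ) (Ham : (Fin n → Fin 2) → ℝ) : ℝ :=
  (⨆ ℓ : ℝ, ((Finset.univ.filter (fun z : Fin n → Fin 2 => Ham z = ℓ)).card : ℝ)) / 2 ^ n

/-- `Δ_t = max_u |{z : α_{t,z} = u}| / 2^n`, the maximum fraction of equal amplitudes at
step `t`. -/
noncomputable def eqAmpFrac (n : ℕ) (β γ : ℕ → ℝ) (Ham : (Fin n → Fin 2) → ℝ) (t : ℕ) : ℝ :=
  (⨆ u : ℂ,
    ((Finset.univ.filter (fun z : Fin n → Fin 2 => qaoaAmp n β γ Ham t z = u)).card : ℝ)) /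
    2 ^ n

/-!
Write `α_{t+1,j} = Σ_z P(z) g(z)` with `P(z) = Π_h a(j_h, z_h)` and `g(z) = α_{t,z} e^{−iγH(z)}`.
Every `|P(z)| ≤ 1`, and `Σ_z P(z) = Π_h (cos β − i sin β)` has modulus one. On the set `A` of
strings lying both in a largest amplitude class and in a largest level set of `H`, `g` is a
constant `c`, so the `A`-part of the sum is `c · (Σ_z P(z) − Σ_{z ∉ A} P(z))`, of modulus at most
`(1 + |Aᶜ|) max |α|`, while the rest contributes at most `|Aᶜ| max |α|`. Inclusion–exclusion
gives `|Aᶜ| ≤ 2^n (2 − Δ_t − δ)`.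
-/

open Finset

theorem norm_sum_le_card_mul {ι E : Type*} [SeminormedAddCommGroup E] (s : Finset ι)
    (f : ι → E) {C : ℝ} (hf : ∀ i ∈ s, ‖f i‖ ≤ C) : ‖∑ i ∈ s, f i‖ ≤ #s * C := by
  simpa using norm_sum_le_of_le s hf

theorem norm_sum_mul_le_of_eqOn {ι R : Type*} [Fintype ι] [DecidableEq ι] [SeminormedRing R]
    (P g : ι → R) (A : Finset ι) (c : R) {M : ℝ} (hP : ∀ z, ‖P z‖ ≤ 1)
    (hPsum : ‖∑ z, P z‖ ≤ 1) (hg : ∀ z, ‖g z‖ ≤ M) (hgA : ∀ z ∈ A, g z = c) (hc : ‖c‖ ≤ M) :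
    ‖∑ z, P z * g z‖ ≤ (1 + 2 * #Aᶜ) * M := by
  have hout : ‖∑ z ∈ Aᶜ, P z * g z‖ ≤ #Aᶜ * M :=
    norm_sum_le_card_mul _ _ fun z _ => (norm_mul_le _ _).trans
      (by simpa using mul_le_mul (hP z) (hg z) (norm_nonneg _) zero_le_one)
  have hin : ∑ z ∈ A, P z * g z = (∑ z, P z - ∑ z ∈ Aᶜ, P z) * c := by
    rw [← sum_compl_add_sum A, add_sub_cancel_left, sum_mul]
    exact sum_congr rfl fun z hz => by rw [hgA z hz]
  have hinP : ‖∑ z, P z - ∑ z ∈ Aᶜ, P z‖ ≤ 1 + #Aᶜ :=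
    (norm_sub_le _ _).trans
      (add_le_add hPsum (by simpa using norm_sum_le_card_mul Aᶜ P fun z _ => hP z))
  calc ‖∑ z, P z * g z‖
      ≤ ‖∑ z ∈ Aᶜ, P z * g z‖ + ‖∑ z ∈ A, P z * g z‖ := by
        rw [← sum_compl_add_sum A]
        exact norm_add_le _ _
    _ ≤ #Aᶜ * M + (1 + #Aᶜ) * M := by
        gcongr
        rw [hin]
        exact (norm_mul_le _ _).trans (mul_le_mul hinP hc (norm_nonneg _) (by positivity))
    _ = (1 + 2 * #Aᶜ) * M := by ring

theorem card_compl_inter_add_card_add_card_le {ι : Type*} [Fintype ι] [DecidableEq ι]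
    (S T : Finset ι) : #(S ∩ T)ᶜ + #S + #T ≤ 2 * Fintype.card ι := by
  have := card_inter_add_card_union S T
  have := card_le_univ (S ∪ T)
  have := card_compl_add_card (S ∩ T)
  omega

theorem exists_ciSup_card_fiber_le {ι β : Type*} [Fintype ι] [Nonempty ι] [DecidableEq β]
    (f : ι → β) :
    ∃ z₀, (⨆ b, (#{z | f z = b} : ℝ)) ≤ #{z | f z = f z₀} := by
  obtain ⟨z₀, -, hz₀⟩ := exists_max_image univ (fun w => #{z | f z = f w}) univ_nonempty
  refine ⟨z₀, Real.iSup_le (fun b => ?_) (Nat.cast_nonneg _)⟩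
  by_cases hb : ∃ w, f w = b
  · obtain ⟨w, rfl⟩ := hb
    exact_mod_cast hz₀ w (mem_univ w)
  · simp [filter_eq_empty_iff.2 fun z _ hz => hb ⟨z, hz⟩]

theorem norm_aEnt_le_one (β : ℝ) (i k : Fin 2) : ‖aEnt β i k‖ ≤ 1 := by
  unfold aEnt
  split_ifs
  · simpa only [Complex.norm_real, Real.norm_eq_abs] using Real.abs_cos_le_one β
  · simpa only [norm_mul, norm_neg, Complex.norm_I, one_mul, Complex.norm_real, Real.norm_eq_abs]
      using Real.abs_sin_le_one β

theorem sum_aEnt (β : ℝ) (i : Fin 2) : ∑ k, aEnt β i k = Complex.exp (-β * Complex.I) := by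
  rw [Complex.exp_mul_I, Fin.sum_univ_two]
  fin_cases i <;> simp [aEnt] <;> ring

theorem norm_prod_aEnt_le_one {n : ℕ} (β : ℝ) (j z : Fin n → Fin 2) :
    ‖∏ h, aEnt β (j h) (z h)‖ ≤ 1 := by
  rw [norm_prod]
  exact prod_le_one (fun _ _ => norm_nonneg _) fun h _ => norm_aEnt_le_one β (j h) (z h)

theorem norm_sum_prod_aEnt {n : ℕ} (β : ℝ) (j : Fin n → Fin 2) :
    ‖∑ z : Fin n → Fin 2, ∏ h, aEnt β (j h) (z h)‖ = 1 := by
  rw [← Fintype.prod_sum fun h k => aEnt β (j h) k, norm_prod]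
  refine prod_eq_one fun h _ => ?_
  rw [sum_aEnt, ← Complex.ofReal_neg]
  exact Complex.norm_exp_ofReal_mul_I _

theorem qaoaAmp_succ (n : ℕ) (β γ : ℕ → ℝ) (Ham : (Fin n → Fin 2) → ℝ) (t : ℕ)
    (j : Fin n → Fin 2) :
    qaoaAmp n β γ Ham (t + 1) j = ∑ z, (∏ h, aEnt (β (t + 1)) (j h) (z h)) *
      (qaoaAmp n β γ Ham t z * Complex.exp (-(Complex.I * γ (t + 1) * Ham z))) := by
  simp only [qaoaAmp, mul_assoc]

theorem one_add_two_mul_le_of_card_le {n b s t : ℕ} {Δ δ : ℝ} (hΔ : Δ ≤ s / 2 ^ n)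
    (hδ : δ ≤ t / 2 ^ n) (hb : b + s + t ≤ 2 * 2 ^ n) :
    1 + 2 * (b : ℝ) ≤ 2 ^ (n + 1) * (2 - Δ - δ) + 1 := by
  have hb' : (b : ℝ) + s + t ≤ 2 * 2 ^ n := by exact_mod_cast hb
  calc 1 + 2 * (b : ℝ) ≤ 2 * (2 * 2 ^ n - s - t) + 1 := by linarith
    _ = 2 ^ (n + 1) * (2 - s / 2 ^ n - t / 2 ^ n) + 1 := by field_simp; ring
    _ ≤ 2 ^ (n + 1) * (2 - Δ - δ) + 1 := by gcongr

theorem qaoaAmp_step_bound_general (n : ℕ) (β γ : ℕ → ℝ)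
    (Ham : (Fin n → Fin 2) → ℝ) (t : ℕ) (j : Fin n → Fin 2) :
    ‖qaoaAmp n β γ Ham (t + 1) j‖ ≤
      (2 ^ (n + 1) * (2 - eqAmpFrac n β γ Ham t - deltaFrac n Ham) + 1) *
        ⨆ z : Fin n → Fin 2, ‖qaoaAmp n β γ Ham t z‖ := by
  set α := qaoaAmp n β γ Ham t
  set e : (Fin n → Fin 2) → ℂ := fun z => Complex.exp (-(Complex.I * γ (t + 1) * Ham z))
  set M := ⨆ z, ‖α z‖
  have hαM (z) : ‖α z‖ ≤ M := le_ciSup (Finite.bddAbove_range fun z => ‖α z‖) z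
  have hM (z w) : ‖α z * e w‖ ≤ M := by
    simpa [e, Complex.norm_exp] using hαM z
  obtain ⟨z₂, hS⟩ := exists_ciSup_card_fiber_le α
  obtain ⟨z₁, hT⟩ := exists_ciSup_card_fiber_le Ham
  set S : Finset _ := {z | α z = α z₂}
  set T : Finset _ := {z | Ham z = Ham z₁}
  have hstep : ‖qaoaAmp n β γ Ham (t + 1) j‖ ≤ (1 + 2 * #(S ∩ T)ᶜ) * M := by
    rw [qaoaAmp_succ]
    exact norm_sum_mul_le_of_eqOn _ (fun z => α z * e z) (S ∩ T) (α z₂ * e z₁)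
      (norm_prod_aEnt_le_one _ j) (norm_sum_prod_aEnt _ j).le (fun z => hM z z)
      (fun z hz => by simp only [S, T, e, mem_inter, mem_filter_univ] at hz ⊢; rw [hz.1, hz.2])
      (hM z₂ z₁)
  have hcoef : 1 + 2 * (#(S ∩ T)ᶜ : ℝ) ≤
      2 ^ (n + 1) * (2 - eqAmpFrac n β γ Ham t - deltaFrac n Ham) + 1 :=
    one_add_two_mul_le_of_card_le (div_le_div_of_nonneg_right hS (by positivity))
      (div_le_div_of_nonneg_right hT (by positivity))
      (by simpa only [Fintype.card_fun, Fintype.card_fin]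
        using card_compl_inter_add_card_add_card_le S T)
  exact hstep.trans (mul_le_mul_of_nonneg_right hcoef ((norm_nonneg _).trans (hαM 0)))

/-- For every `t < p` and every `j ∈ {0,1}^n`,
`|α_{t+1,j}| ≤ (2^{n+1}·(2 − Δ_t − δ) + 1) · max_z |α_{t,z}|`. -/
theorem qaoaAmp_step_bound (n : ℕ) (hn : 1 ≤ n) (p : ℕ) (β γ : ℕ → ℝ)
    (Ham : (Fin n → Fin 2) → ℝ) (t : ℕ) (ht : t < p) (j : Fin n → Fin 2) :
    ‖qaoaAmp n β γ Ham (t + 1) j‖ ≤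
      (2 ^ (n + 1) * (2 - eqAmpFrac n β γ Ham t - deltaFrac n Ham) + 1) *
        ⨆ z : Fin n → Fin 2, ‖qaoaAmp n β γ Ham t z‖ :=
  qaoaAmp_step_bound_general n β γ Ham t j
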